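/- arXiv:1808.07436 — 3 statements merged into one kernel-verified Lean document; each statement's English description precedes it below -/
import Mathlib

section
/- Every point of H_∞ is an accessible point of ∂Ω: for every w ∈ H_∞ one has w ∈ ∂Ω and there exists a continuous map γ : [0,1] → ℂ with γ(t) ∈ Ω for all t ∈ [0,1) and γ(1) = w. -/
open Complex Metric

/-- The pair `(z_ω, ζ_ω)` attached to a binary word `ω` (a `List Bool`, where
concatenating a digit `s` to the word `ω` is represented by `s :: ω`):
`z_𝔢 = 0`, `ζ_𝔢 = 1`, `z_{ω·s} = z_ω + (1-ε) ζ_ω`, `ζ_{ω·1} = iλζ_ω`,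
`ζ_{ω·0} = -iλζ_ω`. -/
noncomputable def htreeData (ε lam : ℝ) : List Bool → ℂ × ℂ
  | [] => (0, 1)
  | s :: ω =>
      ((htreeData ε lam ω).1 + (1 - (ε : ℂ)) * (htreeData ε lam ω).2,
        (if s then Complex.I else -Complex.I) * (lam : ℂ) * (htreeData ε lam ω).2)

/-- The segment `I_ω = {z_ω + t ζ_ω : t ∈ [0,1]}`. -/
noncomputable def htreeSeg (ε lam : ℝ) (ω : List Bool) : Set ℂ :=
  (fun t : ℝ => (htreeData ε lam ω).1 + (t : ℂ) * (htreeData ε lam ω).2) '' Set.Icc 0 1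

/-- The `H`-tree `H = ⋃_ω I_ω`. -/
noncomputable def htree (ε lam : ℝ) : Set ℂ :=
  ⋃ ω : List Bool, htreeSeg ε lam ω

/-- `H_∞ = closure H \ H`. -/
noncomputable def htreeLimit (ε lam : ℝ) : Set ℂ :=
  closure (htree ε lam) \ htree ε lam

/-- `Ω_𝔢`, the open `ε/100`-neighbourhood of the segment `[0,1] ⊆ ℂ`. -/
noncomputable def htreeNbhdBase (ε : ℝ) : Set ℂ :=
  Metric.thickening (ε / 100) ((fun t : ℝ => (t : ℂ)) '' Set.Icc 0 1)

/-- `Ω_ω = {z_ω + ζ_ω u : u ∈ Ω_𝔢}`. -/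
noncomputable def htreeNbhd (ε lam : ℝ) (ω : List Bool) : Set ℂ :=
  (fun u : ℂ => (htreeData ε lam ω).1 + (htreeData ε lam ω).2 * u) '' htreeNbhdBase ε

/-- `Ω = ⋃_ω Ω_ω`. -/
noncomputable def htreeNbhdUnion (ε lam : ℝ) : Set ℂ :=
  ⋃ ω : List Bool, htreeNbhd ε lam ω

/-!
A point `w ∈ H_∞` has an address: digits `σ₀, σ₁, …` such that `w` lies in the closure of the
subtree of `H` above `σ₀ ⋯ σₙ₋₁` for every `n`. Hence `w = z_n + ζ_n uₙ` with `uₙ` in a rectangle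
containing `H`, and `uₙ = 1 - ε ± iλ uₙ₊₁`. The rectangle forces `Re uₙ ≥ 2ε`, which keeps `w` out
of every `Ω_ω`: along the address `|Im uₙ| = λ Re uₙ₊₁ ≥ 2ελ`, and at a word that leaves the address
the branch turns the other way, so the local coordinate of `w` has real part `≤ -2ε`. The polygon
`z₀, z₁, …` runs inside `H` and converges geometrically to `w`.
-/

open Set Filter Topology

section PrefixWord

variable {α : Type*}

/-- The word `σ₀ σ₁ ⋯ σₙ₋₁`, written as in `htreeData`: the last digit is the head of the list. -/
def prefixWord (σ : ℕ → α) : ℕ → List α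
  | 0 => []
  | n + 1 => σ n :: prefixWord σ n

lemma length_prefixWord (σ : ℕ → α) (n : ℕ) : (prefixWord σ n).length = n := by
  induction n with
  | zero => rfl
  | succ n ih => simp [prefixWord, ih]

lemma exists_forall_prefixWord {P : List α → Prop} (h₀ : P [])
    (step : ∀ ω, P ω → ∃ a, P (a :: ω)) : ∃ σ : ℕ → α, ∀ n, P (prefixWord σ n) := by
  choose f hf using step
  let c : ℕ → {ω // P ω} := fun n => Nat.rec ⟨[], h₀⟩ (fun _ p => ⟨f p p.2 :: p, hf p p.2⟩) n
  refine ⟨fun n => f (c n).1 (c n).2, fun n => ?_⟩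
  have hc : prefixWord (fun n => f (c n).1 (c n).2) n = (c n).1 := by
    induction n with
    | zero => rfl
    | succ n ih => simp only [prefixWord, ih]; rfl
  exact hc ▸ (c n).2

lemma eq_prefixWord_or_exists_branch (σ : ℕ → α) (ω : List α) :
    (∃ n, ω = prefixWord σ n) ∨ ∃ l a n, a ≠ σ n ∧ ω = l ++ a :: prefixWord σ n := by
  induction ω with
  | nil => exact Or.inl ⟨0, rfl⟩
  | cons a ω ih =>
    rcases ih with ⟨n, rfl⟩ | ⟨l, b, n, hb, rfl⟩
    · by_cases ha : a = σ n
      · exact Or.inl ⟨n + 1, by rw [ha]; rfl⟩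
      · exact Or.inr ⟨[], a, n, ha, rfl⟩
    · exact Or.inr ⟨a :: l, b, n, hb, rfl⟩

end PrefixWord

section PolygonalPath

/-- `0` on `(-∞, 1 - 2⁻ⁿ]`, `1` on `[1 - 2⁻ⁿ⁻¹, ∞)`, affine in between. -/
def ramp (n : ℕ) (t : ℝ) : ℝ := max 0 (min 1 (2 - 2 ^ (n + 1) * (1 - t)))

lemma continuous_ramp (n : ℕ) : Continuous (ramp n) := by
  unfold ramp; fun_prop

lemma ramp_mem_Icc (n : ℕ) (t : ℝ) : ramp n t ∈ Icc (0 : ℝ) 1 :=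
  ⟨le_max_left _ _, max_le zero_le_one (min_le_left _ _)⟩

lemma ramp_eq_one {n : ℕ} {t : ℝ} (h : 2 ^ (n + 1) * (1 - t) ≤ 1) : ramp n t = 1 := by
  rw [ramp, min_eq_left (by linarith), max_eq_right zero_le_one]

lemma ramp_eq_zero {n : ℕ} {t : ℝ} (h : 2 < 2 ^ (n + 1) * (1 - t)) : ramp n t = 0 := by
  rw [ramp, max_eq_left (min_le_of_right_le (by linarith))]

theorem exists_path_through_partial_sums {E : Type*} [NormedAddCommGroup E] [NormedSpace ℝ E]
    [CompleteSpace E] {d : ℕ → E} (hd : Summable fun n => ‖d n‖) :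
    ∃ γ : ℝ → E, Continuous γ ∧ γ 1 = ∑' n, d n ∧
      ∀ t ∈ Ico (0 : ℝ) 1, ∃ n, ∃ s ∈ Icc (0 : ℝ) 1, γ t = ∑ k ∈ Finset.range n, d k + s • d n := by
  refine ⟨fun t => ∑' n, ramp n t • d n, ?_, ?_, ?_⟩
  · refine continuous_tsum (fun n => (continuous_ramp n).smul continuous_const) hd fun n t => ?_
    rw [norm_smul, Real.norm_of_nonneg (ramp_mem_Icc n t).1]
    exact mul_le_of_le_one_left (norm_nonneg _) (ramp_mem_Icc n t).2
  · simp only [ramp_eq_one (by simp : 2 ^ (_ + 1) * (1 - (1 : ℝ)) ≤ 1), one_smul]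
  · rintro t ⟨ht₀, ht₁⟩
    have hpos : 0 < 1 - t := by linarith
    -- `2⁻ⁿ⁻¹ < 1 - t ≤ 2⁻ⁿ`, so `ramp k t` is `1` for `k < n` and `0` for `k > n`
    obtain ⟨n, hn₁, hn₂⟩ := exists_nat_pow_near (x := (1 - t)⁻¹)
      ((one_le_inv₀ hpos).2 (by linarith)) one_lt_two
    rw [le_inv_comm₀ (by positivity) hpos, ← one_div, le_div_iff₀ (by positivity)] at hn₁
    rw [inv_lt_comm₀ hpos (by positivity), ← one_div, div_lt_iff₀ (by positivity)] at hn₂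
    refine ⟨n, ramp n t, ramp_mem_Icc n t, ?_⟩
    beta_reduce
    have hzero : ∀ k ∉ Finset.range (n + 1), ramp k t • d k = 0 := fun k hk => by
      have hk : n + 2 ≤ k + 1 := by simpa using hk
      have : 2 ^ (n + 2) ≤ (2 : ℝ) ^ (k + 1) := pow_le_pow_right₀ one_le_two hk
      rw [ramp_eq_zero (by rw [pow_succ] at this; nlinarith), zero_smul]
    rw [tsum_eq_sum hzero, Finset.sum_range_succ]
    congr 1
    refine Finset.sum_congr rfl fun k hk => ?_
    have : (2 : ℝ) ^ (k + 1) ≤ 2 ^ n := pow_le_pow_right₀ one_le_two (Finset.mem_range.1 hk)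
    rw [ramp_eq_one (by nlinarith), one_smul]

end PolygonalPath

section HTree

variable {ε lam : ℝ}

/-- The similarity `u ↦ z_ω + ζ_ω u`, which maps `[0,1]` onto `I_ω` and `Ω_𝔢` onto `Ω_ω`. -/
noncomputable def htreeChart (ε lam : ℝ) (ω : List Bool) (u : ℂ) : ℂ :=
  (htreeData ε lam ω).1 + (htreeData ε lam ω).2 * u

noncomputable def htreeDir (s : Bool) : ℂ := if s then I else -I

lemma htreeDir_ne_zero (s : Bool) : htreeDir s ≠ 0 := by
  cases s <;> simp [htreeDir]

lemma htreeDir_eq_neg {s s' : Bool} (h : s ≠ s') : htreeDir s = -htreeDir s' := by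
  cases s <;> cases s' <;> simp_all [htreeDir]

lemma htreeData_snd_ne_zero (hlam : lam ≠ 0) (ω : List Bool) : (htreeData ε lam ω).2 ≠ 0 := by
  induction ω with
  | nil => exact one_ne_zero
  | cons s ω ih =>
    exact mul_ne_zero (mul_ne_zero (htreeDir_ne_zero s) (ofReal_ne_zero.2 hlam)) ih

lemma norm_htreeData_snd (hlam : 0 ≤ lam) (ω : List Bool) :
    ‖(htreeData ε lam ω).2‖ = lam ^ ω.length := by
  induction ω with
  | nil => simp [htreeData]
  | cons s ω ih =>
    rw [htreeData, norm_mul, norm_mul, ih, Complex.norm_real, Real.norm_of_nonneg hlam,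
      List.length_cons, pow_succ]
    cases s <;> simp [mul_comm]

lemma htreeChart_singleton (s : Bool) (u : ℂ) :
    htreeChart ε lam [s] u = (1 - ε) + htreeDir s * lam * u := by
  simp [htreeChart, htreeData, htreeDir]

lemma abs_re_htreeChart_singleton_sub (s : Bool) (u : ℂ) :
    |(htreeChart ε lam [s] u).re - (1 - ε)| = |lam| * |u.im| := by
  cases s <;> simp [htreeChart_singleton, htreeDir, abs_mul]

lemma abs_im_htreeChart_singleton (s : Bool) (u : ℂ) :
    |(htreeChart ε lam [s] u).im| = |lam| * |u.re| := by
  cases s <;> simp [htreeChart_singleton, htreeDir, abs_mul]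

lemma htreeChart_nil : htreeChart ε lam [] = id := by
  ext u; simp [htreeChart, htreeData]

lemma htreeChart_cons (s : Bool) (ω : List Bool) :
    htreeChart ε lam (s :: ω) = htreeChart ε lam ω ∘ htreeChart ε lam [s] := by
  ext u
  simp only [Function.comp_apply, htreeChart_singleton]
  simp only [htreeChart, htreeData, htreeDir]
  ring

lemma htreeChart_append (ω₁ ω₂ : List Bool) :
    htreeChart ε lam (ω₁ ++ ω₂) = htreeChart ε lam ω₂ ∘ htreeChart ε lam ω₁ := by
  induction ω₁ with
  | nil => rw [htreeChart_nil]; rfl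
  | cons s ω₁ ih => rw [List.cons_append, htreeChart_cons, ih, htreeChart_cons s ω₁]; rfl

lemma htreeChart_injective (hlam : lam ≠ 0) (ω : List Bool) :
    Function.Injective (htreeChart ε lam ω) :=
  (add_right_injective _).comp (mul_right_injective₀ (htreeData_snd_ne_zero hlam ω))

lemma isClosedMap_htreeChart (hlam : lam ≠ 0) (ω : List Bool) :
    IsClosedMap (htreeChart ε lam ω) :=
  ((Homeomorph.mulLeft₀ _ (htreeData_snd_ne_zero hlam ω)).trans
    (Homeomorph.addLeft (htreeData ε lam ω).1)).isClosedMap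

lemma eq_neg_of_htreeChart_singleton_eq (hlam : lam ≠ 0) {s s' : Bool} (hs : s ≠ s') {p q : ℂ}
    (h : htreeChart ε lam [s] p = htreeChart ε lam [s'] q) : p = -q := by
  rw [htreeChart_singleton, htreeChart_singleton, htreeDir_eq_neg hs, add_right_inj] at h
  have hc : htreeDir s' * lam ≠ 0 := mul_ne_zero (htreeDir_ne_zero s') (ofReal_ne_zero.2 hlam)
  exact mul_left_cancel₀ hc (by linear_combination -h)

lemma htreeSeg_eq_image (ω : List Bool) :
    htreeSeg ε lam ω = htreeChart ε lam ω '' ((fun t : ℝ => (t : ℂ)) '' Icc 0 1) := by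
  rw [htreeSeg, image_image]
  simp only [htreeChart, mul_comm]

lemma isClosed_htreeSeg (ω : List Bool) : IsClosed (htreeSeg ε lam ω) :=
  (isCompact_Icc.image (by fun_prop)).isClosed

lemma htreeSeg_subset_htree (ω : List Bool) : htreeSeg ε lam ω ⊆ htree ε lam :=
  subset_iUnion (htreeSeg ε lam) ω

lemma htree_subset_htreeNbhdUnion (hε : 0 < ε) : htree ε lam ⊆ htreeNbhdUnion ε lam :=
  iUnion_mono fun ω => by
    rw [htreeSeg_eq_image]
    exact image_mono (self_subset_thickening (by positivity) _)

lemma exists_dist_lt_of_mem_htreeNbhdBase {v : ℂ} (hv : v ∈ htreeNbhdBase ε) :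
    ∃ t ∈ Icc (0 : ℝ) 1, ‖v - t‖ < ε / 100 := by
  obtain ⟨_, ⟨t, ht, rfl⟩, hd⟩ := mem_thickening_iff.1 hv
  exact ⟨t, ht, by rwa [← dist_eq_norm]⟩

lemma abs_im_lt_of_mem_htreeNbhdBase {v : ℂ} (hv : v ∈ htreeNbhdBase ε) : |v.im| < ε / 100 := by
  obtain ⟨t, -, ht⟩ := exists_dist_lt_of_mem_htreeNbhdBase hv
  simpa using (abs_im_le_norm (v - t)).trans_lt ht

def htreeSubtree (ε lam : ℝ) (ω : List Bool) : Set ℂ :=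
  ⋃ l : List Bool, htreeSeg ε lam (l ++ ω)

lemma htreeSubtree_nil : htreeSubtree ε lam [] = htree ε lam := by
  simp [htreeSubtree, htree]

lemma htreeSubtree_eq_image (ω : List Bool) :
    htreeSubtree ε lam ω = htreeChart ε lam ω '' htree ε lam := by
  simp only [htreeSubtree, htree, image_iUnion, htreeSeg_eq_image, htreeChart_append, image_comp]

lemma htreeSubtree_eq_union (ω : List Bool) :
    htreeSubtree ε lam ω = htreeSeg ε lam ω ∪ ⋃ s, htreeSubtree ε lam (s :: ω) := by
  ext x
  simp only [htreeSubtree, mem_union, mem_iUnion]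
  constructor
  · rintro ⟨l, hl⟩
    rcases List.eq_nil_or_concat l with rfl | ⟨l, s, rfl⟩
    · exact Or.inl hl
    · exact Or.inr ⟨s, l, by simpa using hl⟩
  · rintro (hx | ⟨s, l, hl⟩)
    · exact ⟨[], hx⟩
    · exact ⟨l ++ [s], by simpa using hl⟩

lemma exists_mem_closure_htreeSubtree_cons {w : ℂ} (hw : w ∉ htree ε lam) {ω : List Bool}
    (hω : w ∈ closure (htreeSubtree ε lam ω)) :
    ∃ s, w ∈ closure (htreeSubtree ε lam (s :: ω)) := by
  rw [htreeSubtree_eq_union, closure_union, (isClosed_htreeSeg ω).closure_eq,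
    closure_iUnion_of_finite] at hω
  exact mem_iUnion.1 (hω.resolve_left fun h => hw (htreeSeg_subset_htree ω h))

lemma exists_forall_mem_closure_htreeSubtree {w : ℂ} (hw : w ∈ htreeLimit ε lam) :
    ∃ σ : ℕ → Bool, ∀ n, w ∈ closure (htreeSubtree ε lam (prefixWord σ n)) :=
  exists_forall_prefixWord (P := fun ω => w ∈ closure (htreeSubtree ε lam ω))
    (by rw [htreeSubtree_nil]; exact hw.1) fun _ => exists_mem_closure_htreeSubtree_cons hw.2

lemma sum_range_htreeData_snd (σ : ℕ → Bool) (n : ℕ) :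
    ∑ k ∈ Finset.range n, (1 - (ε : ℂ)) * (htreeData ε lam (prefixWord σ k)).2 =
      (htreeData ε lam (prefixWord σ n)).1 := by
  induction n with
  | zero => rfl
  | succ n ih => rw [Finset.sum_range_succ, ih, prefixWord, htreeData]

end HTree

structure HTreeAdmissible (ε lam : ℝ) : Prop where
  eps_pos : 0 < ε
  eps_le : ε ≤ 1 / 100
  half_le_lam : 1 / 2 ≤ lam
  lam_sq_le : lam ^ 2 ≤ 1 / 2 - ε

lemma htreeAdmissible_of_eq {ε lam : ℝ} (hε₁ : 0 < ε) (hε₂ : ε < 1 / 100)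
    (hlam : lam = (2 : ℝ) ^ (-(2 : ℝ)⁻¹) - ε) : HTreeAdmissible ε lam := by
  set a : ℝ := (2 : ℝ) ^ (-(2 : ℝ)⁻¹)
  have ha₀ : 0 < a := by positivity
  have ha : a ^ 2 = 1 / 2 := by
    rw [← Real.rpow_natCast, ← Real.rpow_mul zero_le_two]; norm_num
  have ha' : 7 / 10 < a := by nlinarith
  subst hlam
  exact ⟨hε₁, hε₂.le, by linarith, by nlinarith⟩

/-- A rectangle containing `H`. A point of `H` off `I_𝔢` is `1 - ε ± iλ p` with `p ∈ H`, so the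
bounds `Re ≤ C`, `|Im| ≤ λC` reproduce themselves exactly when `C = 1 + λ²C`. -/
def htreeBox (lam : ℝ) : Set ℂ :=
  {u | 0 ≤ u.re ∧ u.re ≤ (1 - lam ^ 2)⁻¹ ∧ |u.im| ≤ lam * (1 - lam ^ 2)⁻¹}

lemma isClosed_htreeBox (lam : ℝ) : IsClosed (htreeBox lam) :=
  (isClosed_le continuous_const continuous_re).inter
    ((isClosed_le continuous_re continuous_const).inter
      (isClosed_le (continuous_abs.comp continuous_im) continuous_const))

namespace HTreeAdmissible

variable {ε lam : ℝ} (h : HTreeAdmissible ε lam)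
include h

lemma lam_pos : 0 < lam := by linarith [h.half_le_lam]

lemma lam_lt_one : lam < 1 := by nlinarith [h.lam_sq_le, h.eps_pos, h.half_le_lam]

lemma one_sub_sq_pos : 0 < 1 - lam ^ 2 := by nlinarith [h.lam_sq_le, h.eps_pos]

lemma sq_mul_inv_le : lam ^ 2 * (1 - lam ^ 2)⁻¹ ≤ 1 - 3 * ε := by
  rw [← div_eq_mul_inv, div_le_iff₀ h.one_sub_sq_pos]
  nlinarith [h.lam_sq_le, h.eps_pos, h.eps_le]

lemma two_mul_le_re_htreeChart_singleton (s : Bool) {u : ℂ} (hu : u ∈ htreeBox lam) :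
    2 * ε ≤ (htreeChart ε lam [s] u).re := by
  have hdev := abs_re_htreeChart_singleton_sub (ε := ε) (lam := lam) s u
  rw [abs_of_pos h.lam_pos] at hdev
  have him : lam * |u.im| ≤ lam ^ 2 * (1 - lam ^ 2)⁻¹ := by nlinarith [hu.2.2, h.lam_pos]
  linarith [neg_abs_le ((htreeChart ε lam [s] u).re - (1 - ε)), h.sq_mul_inv_le]

lemma mapsTo_htreeChart_singleton (s : Bool) :
    MapsTo (htreeChart ε lam [s]) (htreeBox lam) (htreeBox lam) := by
  intro u hu
  have hC : lam ^ 2 * (1 - lam ^ 2)⁻¹ + 1 = (1 - lam ^ 2)⁻¹ := by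
    field_simp [h.one_sub_sq_pos.ne']; ring
  have hdev := abs_re_htreeChart_singleton_sub (ε := ε) (lam := lam) s u
  have him := abs_im_htreeChart_singleton (ε := ε) (lam := lam) s u
  rw [abs_of_pos h.lam_pos] at hdev him
  refine ⟨by linarith [h.two_mul_le_re_htreeChart_singleton s hu, h.eps_pos], ?_, ?_⟩
  · have : lam * |u.im| ≤ lam ^ 2 * (1 - lam ^ 2)⁻¹ := by nlinarith [hu.2.2, h.lam_pos]
    linarith [le_abs_self ((htreeChart ε lam [s] u).re - (1 - ε)), h.eps_pos]
  · rw [him, abs_of_nonneg hu.1]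
    exact mul_le_mul_of_nonneg_left hu.2.1 h.lam_pos.le

lemma mapsTo_htreeChart (ω : List Bool) :
    MapsTo (htreeChart ε lam ω) (htreeBox lam) (htreeBox lam) := by
  induction ω with
  | nil => rw [htreeChart_nil]; exact mapsTo_id _
  | cons s ω ih => rw [htreeChart_cons]; exact ih.comp (h.mapsTo_htreeChart_singleton s)

lemma ofReal_mem_htreeBox {t : ℝ} (ht : t ∈ Icc (0 : ℝ) 1) : (t : ℂ) ∈ htreeBox lam := by
  have : 1 ≤ (1 - lam ^ 2)⁻¹ := (one_le_inv₀ h.one_sub_sq_pos).2 (by nlinarith)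
  refine ⟨by simpa using ht.1, by simpa using ht.2.trans this, ?_⟩
  simpa using mul_nonneg h.lam_pos.le (inv_nonneg.2 h.one_sub_sq_pos.le)

lemma closure_htree_subset_htreeBox : closure (htree ε lam) ⊆ htreeBox lam :=
  closure_minimal (iUnion_subset fun ω => by
    rw [htreeSeg_eq_image]
    rintro _ ⟨_, ⟨t, ht, rfl⟩, rfl⟩
    exact h.mapsTo_htreeChart ω (h.ofReal_mem_htreeBox ht)) (isClosed_htreeBox lam)

lemma norm_le_of_mem_htreeBox {u : ℂ} (hu : u ∈ htreeBox lam) : ‖u‖ ≤ 2 * (1 - lam ^ 2)⁻¹ := by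
  have : lam * (1 - lam ^ 2)⁻¹ ≤ (1 - lam ^ 2)⁻¹ :=
    mul_le_of_le_one_left (inv_nonneg.2 h.one_sub_sq_pos.le) h.lam_lt_one.le
  linarith [norm_le_abs_re_add_abs_im u, abs_of_nonneg hu.1, hu.2.1, hu.2.2]

lemma neg_lt_re_htreeChart (l : List Bool) {v : ℂ} (hv : v ∈ htreeNbhdBase ε) :
    -(ε / 100) < (htreeChart ε lam l v).re := by
  obtain ⟨t, ht, hvt⟩ := exists_dist_lt_of_mem_htreeNbhdBase hv
  set e := (htreeData ε lam l).2 * (v - t)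
  have hsplit : htreeChart ε lam l v = htreeChart ε lam l t + e := by
    simp only [htreeChart, e]; ring
  have he : ‖e‖ < ε / 100 := by
    rw [norm_mul, norm_htreeData_snd h.lam_pos.le]
    exact (mul_le_of_le_one_left (norm_nonneg _)
      (pow_le_one₀ h.lam_pos.le h.lam_lt_one.le)).trans_lt hvt
  rw [hsplit, add_re]
  linarith [(h.mapsTo_htreeChart l (h.ofReal_mem_htreeBox ht)).1, neg_abs_le e.re, abs_re_le_norm e]

lemma exists_htreeBox_coords {w : ℂ} (hw : w ∈ htreeLimit ε lam) :
    ∃ σ : ℕ → Bool, ∃ u : ℕ → ℂ,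
      ∀ n, u n ∈ htreeBox lam ∧ htreeChart ε lam (prefixWord σ n) (u n) = w := by
  obtain ⟨σ, hσ⟩ := exists_forall_mem_closure_htreeSubtree hw
  have hu : ∀ n, ∃ u ∈ htreeBox lam, htreeChart ε lam (prefixWord σ n) u = w := fun n => by
    have hσn := hσ n
    rw [htreeSubtree_eq_image] at hσn
    exact image_mono h.closure_htree_subset_htreeBox
      ((isClosedMap_htreeChart h.lam_pos.ne' _).closure_image_subset _ hσn)
  choose u hu_mem hu_eq using hu
  exact ⟨σ, u, fun n => ⟨hu_mem n, hu_eq n⟩⟩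

section Coordinates

variable {w : ℂ} {σ : ℕ → Bool} {u : ℕ → ℂ}
  (hu : ∀ n, u n ∈ htreeBox lam ∧ htreeChart ε lam (prefixWord σ n) (u n) = w)
include hu

lemma coord_eq_htreeChart_singleton (n : ℕ) : u n = htreeChart ε lam [σ n] (u (n + 1)) := by
  refine htreeChart_injective (ε := ε) h.lam_pos.ne' (prefixWord σ n) ?_
  rw [(hu n).2, ← Function.comp_apply (f := htreeChart ε lam _), ← htreeChart_cons]
  exact (hu (n + 1)).2.symm

lemma two_mul_le_re_coord (n : ℕ) : 2 * ε ≤ (u n).re := by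
  rw [h.coord_eq_htreeChart_singleton hu n]
  exact h.two_mul_le_re_htreeChart_singleton _ (hu (n + 1)).1

theorem notMem_htreeNbhdUnion : w ∉ htreeNbhdUnion ε lam := by
  intro hw
  obtain ⟨ω, v, hv, hvw⟩ := mem_iUnion.1 hw
  change htreeChart ε lam ω v = w at hvw
  rcases eq_prefixWord_or_exists_branch σ ω with ⟨n, rfl⟩ | ⟨l, s, n, hs, rfl⟩
  · -- `v = uₙ`, whose imaginary part `±λ Re uₙ₊₁` is too large
    have hv' : v = htreeChart ε lam [σ n] (u (n + 1)) :=
      (htreeChart_injective h.lam_pos.ne' _ (hvw.trans (hu n).2.symm)).trans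
        (h.coord_eq_htreeChart_singleton hu n)
    have him := abs_im_htreeChart_singleton (ε := ε) (lam := lam) (σ n) (u (n + 1))
    rw [← hv', abs_of_pos h.lam_pos, abs_of_nonneg (hu (n + 1)).1.1] at him
    have hre := h.two_mul_le_re_coord hu (n + 1)
    nlinarith [abs_im_lt_of_mem_htreeNbhdBase hv, h.half_le_lam, h.eps_pos]
  · -- `ω` leaves the address after `n` digits, where the coordinate of `w` is `-uₙ₊₁`
    rw [htreeChart_append, htreeChart_cons] at hvw
    have hq := eq_neg_of_htreeChart_singleton_eq h.lam_pos.ne' hs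
      ((htreeChart_injective h.lam_pos.ne' _ (hvw.trans (hu n).2.symm)).trans
        (h.coord_eq_htreeChart_singleton hu n))
    have hre := h.neg_lt_re_htreeChart l hv
    rw [hq, neg_re] at hre
    linarith [h.two_mul_le_re_coord hu (n + 1), h.eps_pos]

lemma tendsto_htreeData_fst :
    Tendsto (fun n => (htreeData ε lam (prefixWord σ n)).1) atTop (𝓝 w) := by
  have hbound : ∀ n, ‖(htreeData ε lam (prefixWord σ n)).1 - w‖ ≤
      lam ^ n * (2 * (1 - lam ^ 2)⁻¹) := fun n => by
    rw [← (hu n).2, htreeChart, sub_add_cancel_left, norm_neg, norm_mul,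
      norm_htreeData_snd h.lam_pos.le, length_prefixWord]
    exact mul_le_mul_of_nonneg_left (h.norm_le_of_mem_htreeBox (hu n).1) (by positivity [h.lam_pos])
  rw [tendsto_iff_norm_sub_tendsto_zero]
  refine squeeze_zero (fun n => norm_nonneg _) hbound ?_
  simpa using (tendsto_pow_atTop_nhds_zero_of_lt_one h.lam_pos.le h.lam_lt_one).mul_const
    (2 * (1 - lam ^ 2)⁻¹)

end Coordinates

lemma summable_norm_htreeData_snd (σ : ℕ → Bool) :
    Summable fun n => ‖(1 - (ε : ℂ)) * (htreeData ε lam (prefixWord σ n)).2‖ := by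
  simp only [norm_mul, norm_htreeData_snd h.lam_pos.le, length_prefixWord]
  exact (summable_geometric_of_lt_one h.lam_pos.le h.lam_lt_one).mul_left _

end HTreeAdmissible

/-- Every point of `H_∞` is an accessible point of `∂Ω`. -/
theorem htreeLimit_subset_accessible_boundary
    (ε : ℝ) (hε1 : 0 < ε) (hε2 : ε < (1/100 : ℝ))
    (lam : ℝ) (hlam : lam = (2 : ℝ) ^ (-(2 : ℝ)⁻¹) - ε) :
    ∀ w ∈ htreeLimit ε lam,
      w ∈ frontier (htreeNbhdUnion ε lam) ∧
      ∃ γ : ℝ → ℂ, ContinuousOn γ (Set.Icc 0 1) ∧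
        (∀ t ∈ Set.Ico (0 : ℝ) 1, γ t ∈ htreeNbhdUnion ε lam) ∧ γ 1 = w := by
  intro w hw
  have h := htreeAdmissible_of_eq hε1 hε2 hlam
  obtain ⟨σ, u, hu⟩ := h.exists_htreeBox_coords hw
  have hd := h.summable_norm_htreeData_snd σ
  have hsum : ∑' n, (1 - (ε : ℂ)) * (htreeData ε lam (prefixWord σ n)).2 = w := by
    refine ((hasSum_iff_tendsto_nat_of_summable_norm hd).2 ?_).tsum_eq
    simpa only [sum_range_htreeData_snd] using h.tendsto_htreeData_fst hu
  obtain ⟨γ, hγ, hγ₁, hγt⟩ := exists_path_through_partial_sums hd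
  refine ⟨⟨closure_mono (htree_subset_htreeNbhdUnion hε1) hw.1,
    fun hint => h.notMem_htreeNbhdUnion hu (interior_subset hint)⟩,
    γ, hγ.continuousOn, fun t ht => ?_, hγ₁.trans hsum⟩
  obtain ⟨n, s, hs, hγs⟩ := hγt t ht
  refine htree_subset_htreeNbhdUnion hε1 (mem_iUnion.2 ⟨prefixWord σ n, s * (1 - ε), ?_, ?_⟩)
  · exact ⟨mul_nonneg hs.1 (by linarith), mul_le_one₀ hs.2 (by linarith) (by linarith)⟩
  · rw [hγs, sum_range_htreeData_snd, Complex.real_smul]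
    push_cast
    ring
end

section
/- Let b ∈ (0, 10⁻²), N = ⌊exp(b^{−2})⌋, and G(z) = (b²/2)·Log((b−z)/(bN^{−2}−z)) for z ∈ ℂ_L, where Log is the principal branch of the logarithm. Then: G(0) = b² log N and Re G(z) ≤ b² log N for all z ∈ ℂ_L; Re G(z) > 0 for all z ∈ ℂ_L; Re G'(z) ≥ −b for all z ∈ ℂ_L; |Im G(z)| ≤ πb² for all z ∈ ℂ_L; and there exists an absolute constant A > 0 such that |G(z)| ≤ Ab³/|z| and |G'(z)| ≤ Ab³/|z|² for all z ∈ ℂ_L with |z| ≥ b. -/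
/-!
Write `c = b / N²`, so that `G = (b²/2) L` with `L z = Log ((b - z) / (c - z))`. For `Re z ≤ 0`
the distance `|t - z|` increases with `t ≥ 0` while `|t - z| / t` decreases, which places
`Re L z = log (|b - z| / |c - z|)` in `(0, log (b / c)] = (0, 2 log N]`. The derivative
`L' = (c - z)⁻¹ - (b - z)⁻¹` has real part `≥ -1/b` because `0 ≤ Re w⁻¹ ≤ 1 / Re w` when `Re w > 0`.
Finally `t ↦ Log ((t - z) / (c - z))` has derivative `(t - z)⁻¹` and `|t - z| ≥ |z|`, so the mean
value inequality on `[c, b]` gives `|L z| ≤ (b - c) / |z|`, while `|L' z| ≤ (b - c) / |z|²` is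
immediate; hence `A = 1/2` works.
-/

open Complex

lemma two_le_floor_exp_one_div_sq {b : ℝ} (hb : 0 < b) (hb1 : b ≤ 1) :
    2 ≤ ⌊Real.exp (1 / b ^ 2)⌋₊ := by
  have h1 : 1 ≤ 1 / b ^ 2 := by rw [le_div_iff₀ (by positivity)]; nlinarith
  exact Nat.le_floor <| by
    exact_mod_cast Real.exp_one_gt_two.le.trans (Real.exp_le_exp.mpr h1)

section LeftHalfPlane

variable {z : ℂ} {b c t : ℝ}

lemma norm_ofReal_sub_sq (t : ℝ) (z : ℂ) : ‖(t : ℂ) - z‖ ^ 2 = (t - z.re) ^ 2 + z.im ^ 2 := by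
  rw [Complex.sq_norm, normSq_apply]
  simp only [sub_re, sub_im, ofReal_re, ofReal_im]
  ring

lemma norm_le_norm_ofReal_sub (ht : 0 ≤ t) (hz : z.re ≤ 0) : ‖z‖ ≤ ‖(t : ℂ) - z‖ := by
  rw [← sq_le_sq₀ (norm_nonneg _) (norm_nonneg _), norm_ofReal_sub_sq, Complex.sq_norm,
    normSq_apply]
  nlinarith

lemma norm_ofReal_sub_lt_norm_ofReal_sub (hc : 0 ≤ c) (hcb : c < b) (hz : z.re ≤ 0) :
    ‖(c : ℂ) - z‖ < ‖(b : ℂ) - z‖ := by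
  rw [← sq_lt_sq₀ (norm_nonneg _) (norm_nonneg _), norm_ofReal_sub_sq, norm_ofReal_sub_sq]
  nlinarith

lemma mul_norm_ofReal_sub_le (hc : 0 ≤ c) (hcb : c ≤ b) (hz : z.re ≤ 0) :
    c * ‖(b : ℂ) - z‖ ≤ b * ‖(c : ℂ) - z‖ := by
  have hb : 0 ≤ b := hc.trans hcb
  rw [← sq_le_sq₀ (by positivity) (by positivity), mul_pow, mul_pow, norm_ofReal_sub_sq,
    norm_ofReal_sub_sq]
  have hx : 0 ≤ -z.re := by linarith
  nlinarith [mul_nonneg (mul_nonneg (sub_nonneg.2 hcb) hx)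
      (by nlinarith : 0 ≤ 2 * b * c - (b + c) * z.re),
    mul_le_mul_of_nonneg_right (pow_le_pow_left₀ hc hcb 2) (sq_nonneg z.im)]

lemma ofReal_sub_ne_zero (ht : 0 < t) (hz : z.re ≤ 0) : (t : ℂ) - z ≠ 0 := by
  intro h
  have := congrArg re h
  simp only [sub_re, ofReal_re, zero_re] at this
  linarith

lemma ofReal_sub_div_ofReal_sub_mem_slitPlane (hb : 0 < b) (hc : 0 < c) (hz : z.re ≤ 0) :
    ((b : ℂ) - z) / ((c : ℂ) - z) ∈ slitPlane := by
  refine mem_slitPlane_iff.mpr (Or.inl ?_)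
  have hn : 0 < normSq ((c : ℂ) - z) := normSq_pos.mpr (ofReal_sub_ne_zero hc hz)
  have hbz : 0 < b - z.re := by linarith
  have hcz : 0 < c - z.re := by linarith
  rw [div_re]
  simp only [sub_re, sub_im, ofReal_re, ofReal_im, zero_sub, neg_mul_neg]
  exact add_pos_of_pos_of_nonneg (div_pos (mul_pos hbz hcz) hn)
    (div_nonneg (mul_self_nonneg _) hn.le)

lemma re_inv_le_inv_re {w : ℂ} (hw : 0 < w.re) : w⁻¹.re ≤ w.re⁻¹ := by
  rw [inv_re, div_le_iff₀ (normSq_pos.mpr fun h => by simp [h] at hw), ← div_eq_inv_mul,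
    le_div_iff₀ hw]
  exact re_sq_le_normSq w

lemma neg_inv_le_re_inv_sub_inv (hc : 0 ≤ c) (hb : 0 < b) (hz : z.re ≤ 0) :
    -b⁻¹ ≤ (((c : ℂ) - z)⁻¹ - ((b : ℂ) - z)⁻¹).re := by
  have hcz : 0 ≤ ((c : ℂ) - z)⁻¹.re := by
    rw [inv_re]
    exact div_nonneg (by simp only [sub_re, ofReal_re]; linarith) (normSq_nonneg _)
  have hbz : ((b : ℂ) - z)⁻¹.re ≤ b⁻¹ := by
    have h : b ≤ ((b : ℂ) - z).re := by simp only [sub_re, ofReal_re]; linarith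
    exact (re_inv_le_inv_re (hb.trans_le h)).trans (inv_anti₀ hb h)
  rw [sub_re]
  linarith

lemma norm_inv_sub_inv_le (hc : 0 < c) (hcb : c ≤ b) (hz : z.re ≤ 0) (hz0 : z ≠ 0) :
    ‖((c : ℂ) - z)⁻¹ - ((b : ℂ) - z)⁻¹‖ ≤ (b - c) / ‖z‖ ^ 2 := by
  have hcz := ofReal_sub_ne_zero hc hz
  have hbz := ofReal_sub_ne_zero (hc.trans_le hcb) hz
  have h : ((c : ℂ) - z)⁻¹ - ((b : ℂ) - z)⁻¹ =
      ((b - c : ℝ) : ℂ) / (((c : ℂ) - z) * ((b : ℂ) - z)) := by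
    field_simp
    push_cast
    ring
  have hz_pos : 0 < ‖z‖ := norm_pos_iff.mpr hz0
  rw [h, norm_div, norm_mul, norm_real, Real.norm_of_nonneg (sub_nonneg.2 hcb), sq]
  exact div_le_div_of_nonneg_left (sub_nonneg.2 hcb) (by positivity)
    (mul_le_mul (norm_le_norm_ofReal_sub hc.le hz) (norm_le_norm_ofReal_sub (hc.le.trans hcb) hz)
      (norm_nonneg _) (norm_nonneg _))

end LeftHalfPlane

noncomputable def logRatio (b c : ℝ) (z : ℂ) : ℂ := log (((b : ℂ) - z) / ((c : ℂ) - z))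

section logRatio

variable {z : ℂ} {b c : ℝ}

lemma logRatio_zero (hc : 0 < c) (hcb : c ≤ b) : logRatio b c 0 = Real.log (b / c) := by
  rw [logRatio, sub_zero, sub_zero, ← ofReal_div, ofReal_log (div_nonneg (hc.le.trans hcb) hc.le)]

lemma logRatio_re (b c : ℝ) (z : ℂ) :
    (logRatio b c z).re = Real.log ‖((b : ℂ) - z) / ((c : ℂ) - z)‖ :=
  log_re _

lemma logRatio_re_pos (hc : 0 < c) (hcb : c < b) (hz : z.re ≤ 0) : 0 < (logRatio b c z).re := by
  rw [logRatio_re, norm_div]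
  exact Real.log_pos <| (one_lt_div (norm_pos_iff.mpr (ofReal_sub_ne_zero hc hz))).mpr
    (norm_ofReal_sub_lt_norm_ofReal_sub hc.le hcb hz)

lemma logRatio_re_le (hc : 0 < c) (hcb : c ≤ b) (hz : z.re ≤ 0) :
    (logRatio b c z).re ≤ Real.log (b / c) := by
  have hcz := norm_pos_iff.mpr (ofReal_sub_ne_zero hc hz)
  have hbz := norm_pos_iff.mpr (ofReal_sub_ne_zero (hc.trans_le hcb) hz)
  rw [logRatio_re, norm_div]
  refine Real.log_le_log (by positivity) ?_
  rw [div_le_div_iff₀ hcz hc, mul_comm]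
  exact mul_norm_ofReal_sub_le hc.le hcb hz

lemma hasDerivAt_logRatio (hb : 0 < b) (hc : 0 < c) (hz : z.re ≤ 0) :
    HasDerivAt (logRatio b c) (((c : ℂ) - z)⁻¹ - ((b : ℂ) - z)⁻¹) z := by
  have hcz := ofReal_sub_ne_zero hc hz
  have hbz := ofReal_sub_ne_zero hb hz
  have h := (((hasDerivAt_id' z).const_sub (b : ℂ)).fun_div
    ((hasDerivAt_id' z).const_sub (c : ℂ)) hcz).clog
    (ofReal_sub_div_ofReal_sub_mem_slitPlane hb hc hz)
  exact h.congr_deriv (by field_simp; ring)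

lemma hasDerivAt_logRatio_left {t : ℝ} (hc : 0 < c) (ht : c ≤ t) (hz : z.re ≤ 0) :
    HasDerivAt (fun s : ℝ => logRatio s c z) (((t : ℂ) - z)⁻¹) t := by
  have hcz := ofReal_sub_ne_zero hc hz
  have htz := ofReal_sub_ne_zero (hc.trans_le ht) hz
  have h := (((hasDerivAt_id' (t : ℂ)).sub_const z).div_const ((c : ℂ) - z)).clog
    (ofReal_sub_div_ofReal_sub_mem_slitPlane (hc.trans_le ht) hc hz)
  exact (h.congr_deriv (by field_simp)).comp_ofReal

lemma norm_logRatio_le (hc : 0 < c) (hcb : c ≤ b) (hz : z.re ≤ 0) (hz0 : z ≠ 0) :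
    ‖logRatio b c z‖ ≤ (b - c) / ‖z‖ := by
  have hbound : ∀ t ∈ Set.Ico c b, ‖((t : ℂ) - z)⁻¹‖ ≤ ‖z‖⁻¹ := fun t ht => by
    rw [norm_inv]
    exact inv_anti₀ (norm_pos_iff.mpr hz0) (norm_le_norm_ofReal_sub (hc.le.trans ht.1) hz)
  have h := norm_image_sub_le_of_norm_deriv_le_segment'
    (fun t ht => (hasDerivAt_logRatio_left hc ht.1 hz).hasDerivWithinAt) hbound b ⟨hcb, le_rfl⟩
  rwa [logRatio, logRatio, div_self (ofReal_sub_ne_zero hc hz), log_one, sub_zero,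
    ← div_eq_inv_mul] at h

end logRatio

/-- Properties of `G(z) = (b²/2) Log((b-z)/(bN⁻²-z))` on the closed left half-plane,
where `N = ⌊exp(b⁻²)⌋`: the maximum of `Re G` is `G(0) = b² log N`, `Re G > 0`,
`Re G' ≥ -b`, `|Im G| ≤ πb²`, and away from the origin `|G(z)| ≤ Ab³/|z|`,
`|G'(z)| ≤ Ab³/|z|²` for an absolute constant `A > 0`. -/
theorem log_building_block_properties :
    ∃ A : ℝ, 0 < A ∧
      ∀ b : ℝ, 0 < b → b < (1/100 : ℝ) →
      ∀ N : ℕ, N = ⌊Real.exp (1 / b ^ 2)⌋₊ →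
      ∀ G : ℂ → ℂ,
        (G = fun z => ((b ^ 2 / 2 : ℝ) : ℂ) *
          Complex.log (((b : ℂ) - z) / ((b : ℂ) * ((N : ℂ) ^ 2)⁻¹ - z))) →
        G 0 = ((b ^ 2 * Real.log N : ℝ) : ℂ) ∧
        (∀ z : ℂ, z.re ≤ 0 → (G z).re ≤ b ^ 2 * Real.log N) ∧
        (∀ z : ℂ, z.re ≤ 0 → 0 < (G z).re) ∧
        (∀ z : ℂ, z.re ≤ 0 → -b ≤ (deriv G z).re) ∧
        (∀ z : ℂ, z.re ≤ 0 → |(G z).im| ≤ Real.pi * b ^ 2) ∧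
        (∀ z : ℂ, z.re ≤ 0 → b ≤ ‖z‖ →
          ‖G z‖ ≤ A * b ^ 3 / ‖z‖ ∧
          ‖deriv G z‖ ≤ A * b ^ 3 / ‖z‖ ^ 2) := by
  refine ⟨1 / 2, by norm_num, fun b hb hb1 N hN G hG => ?_⟩
  have hN2 : (2 : ℝ) ≤ N := by exact_mod_cast hN ▸ two_le_floor_exp_one_div_sq hb (by linarith)
  set c := b / (N : ℝ) ^ 2 with hc_def
  have hc : 0 < c := by positivity
  have hcb : c < b := div_lt_self hb (by nlinarith)
  set K := b ^ 2 / 2 with hK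
  have hG' : G = fun z => (K : ℂ) * logRatio b c z := by
    have hcC : (b : ℂ) * ((N : ℂ) ^ 2)⁻¹ = c := by push_cast [hc_def]; ring
    simp only [hG, hcC, logRatio]
  have hderiv : ∀ z : ℂ, z.re ≤ 0 → deriv G z = K * (((c : ℂ) - z)⁻¹ - ((b : ℂ) - z)⁻¹) :=
    fun z hz => hG' ▸ ((hasDerivAt_logRatio hb hc hz).const_mul (K : ℂ)).deriv
  replace hG' : ∀ z, G z = K * logRatio b c z := fun z => by rw [hG']
  have hlogN : Real.log (b / c) = 2 * Real.log N := by
    rw [hc_def, div_div_cancel₀ hb.ne', Real.log_pow, Nat.cast_ofNat]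
  refine ⟨?_, fun z hz => ?_, fun z hz => ?_, fun z hz => ?_, fun z hz => ?_, fun z hz hbz => ?_⟩
  · rw [hG', logRatio_zero hc hcb.le, hlogN, ← ofReal_mul, hK]
    ring_nf
  · rw [hG', re_ofReal_mul, hK]
    nlinarith [logRatio_re_le hc hcb.le hz]
  · rw [hG', re_ofReal_mul]
    exact mul_pos (by positivity) (logRatio_re_pos hc hcb hz)
  · rw [hderiv z hz, re_ofReal_mul]
    have := mul_le_mul_of_nonneg_left (neg_inv_le_re_inv_sub_inv hc.le hb hz)
      (by positivity : 0 ≤ K)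
    have hKb : K * -b⁻¹ = -(b / 2) := by rw [hK]; field_simp
    linarith
  · rw [hG', im_ofReal_mul, logRatio, log_im, abs_mul, abs_of_pos (by positivity)]
    nlinarith [abs_arg_le_pi ((b - z) / (c - z)), Real.pi_pos]
  have hz0 : z ≠ 0 := norm_pos_iff.mp (hb.trans_le hbz)
  constructor
  · rw [hG', norm_mul, norm_real, Real.norm_of_nonneg (by positivity)]
    calc K * ‖logRatio b c z‖ ≤ K * (b / ‖z‖) := by
          gcongr
          exact (norm_logRatio_le hc hcb.le hz hz0).trans (by gcongr; linarith)
      _ = 1 / 2 * b ^ 3 / ‖z‖ := by rw [hK]; ring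
  · rw [hderiv z hz, norm_mul, norm_real, Real.norm_of_nonneg (by positivity)]
    calc K * ‖((c : ℂ) - z)⁻¹ - ((b : ℂ) - z)⁻¹‖ ≤ K * (b / ‖z‖ ^ 2) := by
          gcongr
          exact (norm_inv_sub_inv_le hc hcb.le hz hz0).trans (by gcongr; linarith)
      _ = 1 / 2 * b ^ 3 / ‖z‖ ^ 2 := by rw [hK]; ring
end

section
/- There exists T₀ ≥ 100 such that for every T ≥ T₀ the following holds. With Q = T^{1/12}, ε = T^{−1/2}, let (w_n)_{n≥0} be complex numbers with w₀ = 0, |w_n| < 1 for all n, a_n = w_{n+1} − w_n, satisfying for all n ≥ 0: 1 − ε < |a_{n+1}|/|a_n| < 1 + ε, |arg(a_{n+1}·conj(a_n))| ≤ ε, and |a_n| ≥ 2^{−n}T^{−2}. Set y_k = Q^k and H(x) = Σ_{k≥1} i a_k y_k/(x + i y_k)² for real x. Then for every n ≥ 1 and every x ∈ [y_n, y_{n+2}], Re(conj(a_n)·H(x)) > 0. -/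
open Complex Metric

/-- The quadrilateral `Q⁻_n` (with `σ = -1`) or `Q⁺_n` (with `σ = 1`):
the convex hull of `{w_n, w_{n+1}, w_n + 2σi a_n, w_{n+1} + 2σi a_n}`. -/
noncomputable def quadQ (σ : ℝ) (w a : ℕ → ℂ) (n : ℕ) : Set ℂ :=
  convexHull ℝ ({w n, w (n + 1), w n + (σ : ℂ) * (2 * Complex.I * a n),
    w (n + 1) + (σ : ℂ) * (2 * Complex.I * a n)} : Set ℂ)

/-- The triangle `T⁻_n` (with `σ = -1`) or `T⁺_n` (with `σ = 1`):
the convex hull of `{w_{n+1}, w_{n+1} + 2σi a_n, w_{n+1} + 2σi a_{n+1}}`. -/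
noncomputable def triT (σ : ℝ) (w a : ℕ → ℂ) (n : ℕ) : Set ℂ :=
  convexHull ℝ ({w (n + 1), w (n + 1) + (σ : ℂ) * (2 * Complex.I * a n),
    w (n + 1) + (σ : ℂ) * (2 * Complex.I * a (n + 1))} : Set ℂ)

lemma exp_I_sub_one_norm (θ : ℝ) : ‖Complex.exp (θ * Complex.I) - 1‖ ≤ |θ| := by
  have key : ‖Complex.exp (θ * Complex.I) - 1‖ ^ 2 ≤ |θ| ^ 2 := by
    rw [Complex.sq_norm, Complex.exp_mul_I, ← Complex.ofReal_cos,
      ← Complex.ofReal_sin, Complex.normSq_apply, _root_.sq_abs]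
    simp only [Complex.sub_re, Complex.add_re, Complex.ofReal_re, Complex.mul_re,
      Complex.I_re, Complex.I_im, Complex.ofReal_im, Complex.one_re, Complex.sub_im,
      Complex.add_im, Complex.mul_im, Complex.one_im]
    nlinarith [Real.sin_sq_add_cos_sq θ, Real.one_sub_sq_div_two_le_cos (x := θ)]
  nlinarith [norm_nonneg (Complex.exp (θ * Complex.I) - 1), abs_nonneg θ]

lemma re_term (b : ℂ) (x Y : ℝ) (hx : 0 < x) :
    (b * (Complex.I * (Y:ℂ)) / ((x:ℂ) + Complex.I * (Y:ℂ))^2).re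
      = Y * (2*x*Y*b.re - (x^2 - Y^2)*b.im) / (x^2+Y^2)^2 := by
  have hD : (x^2 + Y^2) ≠ 0 := by positivity
  simp only [Complex.div_re, Complex.normSq_apply, Complex.mul_re, Complex.mul_im,
    Complex.add_re, Complex.add_im, Complex.ofReal_re, Complex.ofReal_im,
    Complex.I_re, Complex.I_im, pow_two]
  rw [← add_div, div_eq_div_iff (ne_of_gt (by ring_nf; nlinarith [pow_pos hx 4, sq_nonneg (x*Y), sq_nonneg (Y^2)]))
    (ne_of_gt (by nlinarith [pow_pos hx 4, sq_nonneg (x*Y), sq_nonneg (Y^2)]))]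
  ring

lemma normsq_term (x Y : ℝ) : ‖((x:ℂ) + Complex.I * (Y:ℂ))^2‖ = x^2 + Y^2 := by
  rw [norm_pow, Complex.sq_norm, Complex.normSq_apply]
  simp
  ring

lemma norm_term_le (bv : ℂ) (x Y : ℝ) (hY : 0 < Y) :
    ‖Complex.I * bv * (Y:ℂ) / ((x:ℂ) + Complex.I * (Y:ℂ))^2‖ ≤ ‖bv‖ / Y := by
  rw [norm_div, normsq_term, norm_mul, norm_mul]
  simp only [Complex.norm_I, one_mul, Complex.norm_real, Real.norm_eq_abs,
    abs_of_pos hY]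
  rw [div_le_div_iff₀ (by positivity) hY]
  nlinarith [norm_nonneg bv, sq_nonneg x]

lemma per_term (x Y ρ δ : ℝ) (v : ℂ) (hx : 0 < x) (hY : 0 < Y) (hρ : 0 ≤ ρ) (hδ : 0 ≤ δ)
    (hvre : 1 - δ ≤ v.re) (hvim : |v.im| ≤ δ) :
    ρ * (2*x*Y^2 / (x^2+Y^2)^2) - 2*δ*ρ*Y/(x^2+Y^2)
      ≤ (((ρ:ℝ):ℂ) * v * (Complex.I * (Y:ℂ)) / ((x:ℂ) + Complex.I*(Y:ℂ))^2).re := by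
  rw [re_term _ _ _ hx]
  have hP : (0:ℝ) < x^2 + Y^2 := by positivity
  have hre : ((ρ:ℝ):ℂ).re * v.re - ((ρ:ℝ):ℂ).im * v.im = ρ * v.re := by simp
  have him : (((ρ:ℝ):ℂ) * v).im = ρ * v.im := by simp [Complex.mul_im]
  have hre2 : (((ρ:ℝ):ℂ) * v).re = ρ * v.re := by simp [Complex.mul_re]
  rw [hre2, him]
  have habs := abs_le.mp hvim
  have key : 2*x*Y^2 - 2*δ*Y*(x^2+Y^2) ≤ Y*(2*x*Y*v.re - (x^2-Y^2)*v.im) := by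
    have q1 : 0 ≤ 2*x*Y^2 * (v.re - (1 - δ)) := mul_nonneg (by positivity) (by linarith)
    rcases le_total Y x with hc | hc
    · have q5 : 0 ≤ (Y*(x^2 - Y^2))*(δ - v.im) :=
        mul_nonneg (mul_nonneg hY.le (by nlinarith)) (by linarith [habs.2])
      have q6 : 0 ≤ (Y*δ)*((x-Y)^2 + 2*Y^2) :=
        mul_nonneg (mul_nonneg hY.le hδ) (by positivity)
      nlinarith [q1, q5, q6]
    · have q5 : 0 ≤ (Y*(Y^2 - x^2))*(δ + v.im) :=
        mul_nonneg (mul_nonneg hY.le (by nlinarith)) (by linarith [habs.1])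
      have q6 : 0 ≤ (Y*δ)*((x-Y)^2 + 2*x^2) :=
        mul_nonneg (mul_nonneg hY.le hδ) (by positivity)
      nlinarith [q1, q5, q6]
  have heq : ρ * (2*x*Y^2 / (x^2+Y^2)^2) - 2*δ*ρ*Y/(x^2+Y^2)
      = ρ * (2*x*Y^2 - 2*δ*Y*(x^2+Y^2)) / (x^2+Y^2)^2 := by
    field_simp
  have heq2 : Y * (2*x*Y*(ρ*v.re) - (x^2 - Y^2)*(ρ*v.im)) / (x^2+Y^2)^2
      = ρ * (Y*(2*x*Y*v.re - (x^2-Y^2)*v.im)) / (x^2+Y^2)^2 := by ring_nf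
  rw [heq, heq2]
  apply div_le_div_of_nonneg_right ?_ (by positivity)
  exact mul_le_mul_of_nonneg_left key hρ

lemma error_bound (ε Q x Y an aj : ℝ) (Dk ddj : ℕ) (hε : 0 < ε) (hεs : ε ≤ 1/10^6)
    (hQ : 10 ≤ Q) (hx : 0 < x) (hY : 0 < Y) (han : 0 < an) (haj : 0 < aj)
    (hajb : aj ≤ (1+ε)^(2*ddj) * an) (hdd : ddj ≤ Dk + 2)
    (hP : x * Q^Dk * Y ≤ x^2 + Y^2) :
    2*(ε*(ddj:ℝ))*(an*aj)*Y/(x^2+Y^2) ≤ 16*ε*an^2/x * (4/Q)^Dk := by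
  have hQpos : (0:ℝ) < Q := by linarith
  have hfrac : Y/(x^2+Y^2) ≤ 1/(x*Q^Dk) := by
    rw [div_le_div_iff₀ (by positivity) (by positivity)]
    calc Y * (x*Q^Dk) = x * Q^Dk * Y := by ring
      _ ≤ x^2+Y^2 := hP
      _ = (x^2+Y^2) * 1 := by ring
      _ ≤ 1 * (x^2+Y^2) := by linarith
  have hpow : (ddj:ℝ) * (1+ε)^(2*ddj) ≤ 8 * 4^Dk := by
    have h1 : ((1+ε):ℝ)^(2*ddj) = ((1+ε)^2)^ddj := by rw [← pow_mul]
    have h2 : ((1+ε):ℝ)^2 ≤ 2 := by nlinarith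
    have h3 : ((1+ε):ℝ)^(2*ddj) ≤ 2^ddj := by
      rw [h1]
      exact pow_le_pow_left₀ (by positivity) h2 ddj
    have h4 : (2:ℝ)^ddj ≤ 2^(Dk+2) := pow_le_pow_right₀ (by norm_num) hdd
    have h5 : (ddj:ℝ) ≤ 2^(Dk+1) := by
      have := Nat.lt_two_pow_self (n := Dk+1)
      calc (ddj:ℝ) ≤ (Dk:ℝ)+2 := by exact_mod_cast hdd
        _ ≤ 2^(Dk+1) := by exact_mod_cast Nat.succ_le_of_lt this
    calc (ddj:ℝ) * (1+ε)^(2*ddj) ≤ 2^(Dk+1) * 2^(Dk+2) := by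
          apply mul_le_mul h5 (h3.trans h4) (by positivity) (by positivity)
      _ = 8 * 4^Dk := by
          have h6 : (4:ℝ)^Dk = 2^Dk * 2^Dk := by
            rw [show (4:ℝ) = 2*2 by norm_num, mul_pow]
          rw [pow_add, pow_add, h6]; ring
  have hQD : (0:ℝ) < Q^Dk := pow_pos hQpos Dk
  calc 2*(ε*(ddj:ℝ))*(an*aj)*Y/(x^2+Y^2)
      = (2*ε*an) * ((ddj:ℝ) * aj) * (Y/(x^2+Y^2)) := by ring
    _ ≤ (2*ε*an) * ((ddj:ℝ) * ((1+ε)^(2*ddj)*an)) * (1/(x*Q^Dk)) := by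
        apply mul_le_mul
        · apply mul_le_mul_of_nonneg_left ?_ (by positivity)
          exact mul_le_mul_of_nonneg_left hajb (Nat.cast_nonneg _)
        · exact hfrac
        · positivity
        · positivity
    _ = (2*ε*an^2) * ((ddj:ℝ) * (1+ε)^(2*ddj)) * (1/(x*Q^Dk)) := by ring
    _ ≤ (2*ε*an^2) * (8*4^Dk) * (1/(x*Q^Dk)) := by
        apply mul_le_mul_of_nonneg_right ?_ (by positivity)
        exact mul_le_mul_of_nonneg_left hpow (by positivity)
    _ = 16*ε*an^2/x * (4/Q)^Dk := by
        rw [div_pow]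
        field_simp
        ring

lemma main_term (Q x Y an ak : ℝ) (hQ : 10 ≤ Q) (hx : 0 < x) (hY : 0 < Y)
    (hYx : Y ≤ x) (hxQ : x ≤ Q*Y) (han : 0 < an) (hak : 0 < ak) (hanak : an ≤ 2*ak) :
    an^2/(4*Q^2*x) ≤ an*ak*(2*x*Y^2/((x^2+Y^2)^2)) := by
  have hQpos : (0:ℝ) < Q := by linarith
  rw [div_le_iff₀ (by positivity)]
  have h0 : x^2+Y^2 ≤ 2*x^2 := by nlinarith
  have h1 : (x^2+Y^2)^2 ≤ 4*x^4 := by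
    have := pow_le_pow_left₀ (by positivity : (0:ℝ) ≤ x^2+Y^2) h0 2
    nlinarith [this]
  have h3 : x^2 ≤ Q^2*Y^2 := by nlinarith
  have heq : an*ak*(2*x*Y^2/((x^2+Y^2)^2)) * (4*Q^2*x)
      = (an*ak*(8*Q^2*Y^2*x^2)) / ((x^2+Y^2)^2) := by
    field_simp
    ring
  rw [heq]
  rw [le_div_iff₀ (by positivity)]
  have h4 : an^2 * (x^2+Y^2)^2 ≤ an^2 * (4*x^4) :=
    mul_le_mul_of_nonneg_left h1 (by positivity)
  have h5 : an^2*(4*x^2)*x^2 ≤ an^2*(4*x^2)*(Q^2*Y^2) :=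
    mul_le_mul_of_nonneg_left h3 (by positivity)
  have h6 : an*an*(4*x^2*Q^2*Y^2) ≤ an*(2*ak)*(4*x^2*Q^2*Y^2) := by
    apply mul_le_mul_of_nonneg_right ?_ (by positivity)
    exact mul_le_mul_of_nonneg_left hanak han.le
  nlinarith [h4, h5, h6]


set_option maxHeartbeats 2000000 in
/-- For `x ∈ [y_n, y_{n+2}]`, `Re(conj(a_n) H(x)) > 0`, where `H = f'`. -/
theorem derivative_direction_on_positive_axis :
    ∃ T₀ : ℝ, 100 ≤ T₀ ∧
      ∀ T : ℝ, T₀ ≤ T →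
      ∀ Q ε : ℝ, Q = T ^ ((1 : ℝ) / 12) → ε = T ^ (-(1 : ℝ) / 2) →
      ∀ w a : ℕ → ℂ,
        w 0 = 0 → (∀ n, ‖w n‖ < 1) → (∀ n, a n = w (n + 1) - w n) →
        (∀ n, 1 - ε < ‖a (n + 1)‖ / ‖a n‖) →
        (∀ n, ‖a (n + 1)‖ / ‖a n‖ < 1 + ε) →
        (∀ n, |(a (n + 1) * (starRingEnd ℂ) (a n)).arg| ≤ ε) →
        (∀ n, ((2 : ℝ) ^ n)⁻¹ * (T ^ 2)⁻¹ ≤ ‖a n‖) →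
      ∀ y : ℕ → ℝ, (∀ k, y k = Q ^ k) →
      ∀ H : ℝ → ℂ,
        (∀ x : ℝ, H x = ∑' k : ℕ,
          Complex.I * a (k + 1) * ((y (k + 1) : ℝ) : ℂ) /
            ((x : ℂ) + Complex.I * ((y (k + 1) : ℝ) : ℂ)) ^ 2) →
      ∀ n : ℕ, 1 ≤ n → ∀ x : ℝ, x ∈ Set.Icc (y n) (y (n + 2)) →
        0 < ((starRingEnd ℂ) (a n) * H x).re := by
  refine ⟨(10:ℝ)^12, by norm_num, ?_⟩
  intro T hT Q ε hQdef hεdef w a hw0 hw1 ha hr1 hr2 harg hlow y hy H hH n hn x hx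
  have hTpos : (0:ℝ) < T := lt_of_lt_of_le (by norm_num) hT
  -- numeric facts about Q and ε
  have hQ10 : (10:ℝ) ≤ Q := by
    rw [hQdef]
    calc (10:ℝ) = ((10:ℝ)^(12:ℕ)) ^ ((1:ℝ)/12) := by
          rw [← Real.rpow_natCast 10 12, ← Real.rpow_mul (by norm_num)]; norm_num
      _ ≤ T ^ ((1:ℝ)/12) := Real.rpow_le_rpow (by positivity) hT (by norm_num)
  have hQpos : (0:ℝ) < Q := by linarith
  have hεpos : 0 < ε := by rw [hεdef]; positivity
  have hεQ2 : ε * Q^2 ≤ 1/10^4 := by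
    have h1 : Q^2 = T ^ ((1:ℝ)/6) := by
      rw [hQdef, ← Real.rpow_natCast (T ^ ((1:ℝ)/12)) 2, ← Real.rpow_mul hTpos.le]
      norm_num
    have h2 : ε * Q^2 = T ^ (-(1:ℝ)/3) := by
      rw [hεdef, h1, ← Real.rpow_add hTpos]; norm_num
    have h3 : (10:ℝ)^4 ≤ T ^ ((1:ℝ)/3) := by
      calc ((10:ℝ)^4) = ((10:ℝ)^(12:ℕ)) ^ ((1:ℝ)/3) := by
            rw [← Real.rpow_natCast 10 12, ← Real.rpow_mul (by norm_num)]; norm_num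
        _ ≤ T ^ ((1:ℝ)/3) := Real.rpow_le_rpow (by positivity) hT (by norm_num)
    have h4 : T ^ (-(1:ℝ)/3) = (T ^ ((1:ℝ)/3))⁻¹ := by
      rw [neg_div, Real.rpow_neg hTpos.le]
    rw [h2, h4]
    rw [inv_le_comm₀ (by positivity) (by norm_num)]
    · linarith
  have hQ100 : (100:ℝ) ≤ Q^2 := by nlinarith
  have hεsmall : ε ≤ 1/10^6 := by
    have := mul_le_mul_of_nonneg_left hQ100 hεpos.le
    linarith
  clear hw0
  -- basic positivity facts
  have hapos : ∀ m, 0 < ‖a m‖ := fun m =>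
    lt_of_lt_of_le (by positivity) (hlow m)
  have ha0 : ∀ m, a m ≠ 0 := fun m => by
    intro h; have := hapos m; rw [h] at this; simp at this
  have ha2 : ∀ m, ‖a m‖ ≤ 2 := by
    intro m
    rw [ha m]
    calc ‖w (m+1) - w m‖ ≤ ‖w (m+1)‖ + ‖w m‖ := norm_sub_le _ _
      _ ≤ 2 := by linarith [hw1 (m+1), hw1 m]
  have hypos : ∀ k, 0 < y k := fun k => by rw [hy]; positivity
  have hx1 : y n ≤ x := hx.1
  have hx2 : x ≤ y (n+2) := hx.2
  have hx0 : 0 < x := lt_of_lt_of_le (hypos n) hx1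
  -- norm growth of a
  have haup : ∀ m, ‖a (m+1)‖ ≤ (1+ε) * ‖a m‖ := by
    intro m
    have h := hr2 m
    rw [div_lt_iff₀ (hapos m)] at h
    linarith
  have hadown : ∀ m, ‖a m‖ ≤ (1+ε)^2 * ‖a (m+1)‖ := by
    intro m
    have h := hr1 m
    rw [lt_div_iff₀ (hapos m)] at h
    have h3 : (1+ε)^2*((1-ε)*‖a m‖) ≤ (1+ε)^2*‖a (m+1)‖ :=
      mul_le_mul_of_nonneg_left h.le (by positivity)
    have h4 : (0:ℝ) ≤ (ε - ε^2 - ε^3) * ‖a m‖ :=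
      mul_nonneg (by nlinarith [hεpos, hεsmall]) (norm_nonneg _)
    nlinarith [h3, h4]
  have hone : (1:ℝ) ≤ 1 + ε := by linarith
  have hajup : ∀ d, ‖a (n+d)‖ ≤ (1+ε)^(2*d) * ‖a n‖ := by
    intro d
    induction d with
    | zero => simp
    | succ d ih =>
      have h1 : ‖a (n+d+1)‖ ≤ (1+ε) * ‖a (n+d)‖ := haup (n+d)
      have h2 : (1+ε) * ((1+ε)^(2*d) * ‖a n‖) ≤ (1+ε)^(2*(d+1)) * ‖a n‖ := by
        have : (1+ε)^(2*d+1) ≤ (1+ε)^(2*(d+1)) :=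
          pow_le_pow_right₀ hone (by omega)
        calc (1+ε) * ((1+ε)^(2*d) * ‖a n‖) = (1+ε)^(2*d+1) * ‖a n‖ := by ring
          _ ≤ (1+ε)^(2*(d+1)) * ‖a n‖ :=
            mul_le_mul_of_nonneg_right this (norm_nonneg _)
      have h3 : (1+ε) * ‖a (n+d)‖ ≤ (1+ε) * ((1+ε)^(2*d) * ‖a n‖) :=
        mul_le_mul_of_nonneg_left ih (by linarith)
      calc ‖a (n+(d+1))‖ = ‖a (n+d+1)‖ := by ring_nf
        _ ≤ _ := h1
        _ ≤ _ := h3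
        _ ≤ _ := h2
  have hajdown : ∀ d, ‖a (n-d)‖ ≤ (1+ε)^(2*d) * ‖a n‖ := by
    intro d
    induction d with
    | zero => simp
    | succ d ih =>
      rcases Nat.eq_zero_or_pos (n - d) with h0 | hp
      · have he1 : n - (d+1) = n - d := by omega
        rw [he1]
        have : (1+ε)^(2*d) ≤ (1+ε)^(2*(d+1)) := pow_le_pow_right₀ hone (by omega)
        calc ‖a (n-d)‖ ≤ (1+ε)^(2*d) * ‖a n‖ := ih
          _ ≤ (1+ε)^(2*(d+1)) * ‖a n‖ :=
            mul_le_mul_of_nonneg_right this (norm_nonneg _)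
      · have he1 : n - (d+1) + 1 = n - d := by omega
        have h1 : ‖a (n-(d+1))‖ ≤ (1+ε)^2 * ‖a (n-(d+1)+1)‖ := hadown _
        rw [he1] at h1
        calc ‖a (n-(d+1))‖ ≤ (1+ε)^2 * ‖a (n-d)‖ := h1
          _ ≤ (1+ε)^2 * ((1+ε)^(2*d) * ‖a n‖) :=
            mul_le_mul_of_nonneg_left ih (by positivity)
          _ = (1+ε)^(2*(d+1)) * ‖a n‖ := by ring
  -- unit vectors
  set u : ℕ → ℂ := fun m => a m / ((‖a m‖ : ℝ) : ℂ) with hu_def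
  have hre0 : ∀ m, ((‖a m‖ : ℝ) : ℂ) ≠ 0 := fun m => by
    exact_mod_cast (hapos m).ne'
  have hau : ∀ m, ((‖a m‖ : ℝ) : ℂ) * u m = a m := fun m =>
    mul_div_cancel₀ _ (hre0 m)
  have hu1 : ∀ m, ‖u m‖ = 1 := by
    intro m
    rw [hu_def]
    simp only [norm_div, Complex.norm_real, Real.norm_eq_abs, abs_of_pos (hapos m)]
    exact div_self (hapos m).ne'
  have huc : ∀ m, u m * (starRingEnd ℂ) (u m) = 1 := by
    intro m
    rw [Complex.mul_conj, Complex.normSq_eq_norm_sq, hu1]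
    norm_num
  have hustep : ∀ m, ‖u (m+1) - u m‖ ≤ ε := by
    intro m
    set p := a (m+1) * (starRingEnd ℂ) (a m) with hp_def
    have hpabs : (‖p‖ : ℝ) = ‖a (m+1)‖ * ‖a m‖ := by
      rw [hp_def, norm_mul, Complex.norm_conj]
    have hpne : (‖p‖ : ℝ) ≠ 0 := by
      rw [hpabs]; exact (mul_pos (hapos _) (hapos _)).ne'
    have hkey : u (m+1) * (starRingEnd ℂ) (u m) = Complex.exp ((p.arg : ℂ) * Complex.I) := by
      have h1 : u (m+1) * (starRingEnd ℂ) (u m) = p / ((‖p‖ : ℝ) : ℂ) := by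
        rw [hu_def]
        simp only [map_div₀, Complex.conj_ofReal]
        rw [hpabs, hp_def]
        push_cast
        field_simp
      rw [h1]
      nth_rewrite 1 [← Complex.norm_mul_exp_arg_mul_I p]
      rw [mul_comm, mul_div_assoc]
      rw [div_self (by exact_mod_cast hpne), mul_one]
    have h2 : ‖u (m+1) - u m‖ = ‖(u (m+1) - u m) * (starRingEnd ℂ) (u m)‖ := by
      rw [norm_mul]
      rw [RCLike.norm_conj, hu1, mul_one]
    rw [h2, sub_mul, huc m, hkey]
    calc ‖Complex.exp ((p.arg : ℂ) * Complex.I) - 1‖ ≤ |p.arg| := exp_I_sub_one_norm _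
      _ ≤ ε := harg m
  have huup : ∀ d, ‖u (n+d) - u n‖ ≤ ε * d := by
    intro d
    induction d with
    | zero => simp
    | succ d ih =>
      have hb : ‖u (n+(d+1)) - u n‖ ≤ ε + ε * d := by
        calc ‖u (n+(d+1)) - u n‖ = ‖(u (n+d+1) - u (n+d)) + (u (n+d) - u n)‖ := by
              ring_nf
          _ ≤ ‖u (n+d+1) - u (n+d)‖ + ‖u (n+d) - u n‖ := norm_add_le _ _
          _ ≤ ε + ε * d := add_le_add (hustep (n+d)) ih
      push_cast
      linarith
  have hudown : ∀ d, ‖u (n-d) - u n‖ ≤ ε * d := by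
    intro d
    induction d with
    | zero => simp
    | succ d ih =>
      rcases Nat.eq_zero_or_pos (n - d) with h0 | hp
      · have he1 : n - (d+1) = n - d := by omega
        rw [he1]
        push_cast
        nlinarith [ih, hεpos]
      · have he1 : n - (d+1) + 1 = n - d := by omega
        have hb : ‖u (n-(d+1)) - u n‖ ≤ ε + ε * d := by
          calc ‖u (n-(d+1)) - u n‖
              = ‖(u (n-(d+1)) - u (n-(d+1)+1)) + (u (n-(d+1)+1) - u n)‖ := by ring_nf
            _ ≤ ‖u (n-(d+1)) - u (n-(d+1)+1)‖ + ‖u (n-(d+1)+1) - u n‖ := norm_add_le _ _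
            _ = ‖u (n-(d+1)+1) - u (n-(d+1))‖ + ‖u (n-d) - u n‖ := by
                rw [norm_sub_rev, he1]
            _ ≤ ε + ε * d := add_le_add (hustep _) ih
        push_cast
        linarith
  -- combined distance to n
  set dd : ℕ → ℕ := fun j => max (j - n) (n - j) with hdd_def
  have haj : ∀ j, ‖a j‖ ≤ (1+ε)^(2 * dd j) * ‖a n‖ := by
    intro j
    rcases le_total n j with hc | hc
    · have h1 := hajup (j - n)
      rw [show n + (j - n) = j from by omega] at h1
      refine h1.trans (mul_le_mul_of_nonneg_right ?_ (norm_nonneg _))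
      refine pow_le_pow_right₀ hone ?_
      simp only [hdd_def]
      exact Nat.mul_le_mul_left _ (le_max_left _ _)
    · have h1 := hajdown (n - j)
      rw [show n - (n - j) = j from by omega] at h1
      refine h1.trans (mul_le_mul_of_nonneg_right ?_ (norm_nonneg _))
      refine pow_le_pow_right₀ hone ?_
      simp only [hdd_def]
      exact Nat.mul_le_mul_left _ (le_max_right _ _)
  have huj : ∀ j, ‖u j - u n‖ ≤ ε * dd j := by
    intro j
    rcases le_total n j with hc | hc
    · have h1 := huup (j - n)
      rw [show n + (j - n) = j from by omega] at h1
      refine h1.trans (mul_le_mul_of_nonneg_left ?_ hεpos.le)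
      refine Nat.cast_le.mpr ?_
      simp only [hdd_def]
      exact le_max_left _ _
    · have h1 := hudown (n - j)
      rw [show n - (n - j) = j from by omega] at h1
      refine h1.trans (mul_le_mul_of_nonneg_left ?_ hεpos.le)
      refine Nat.cast_le.mpr ?_
      simp only [hdd_def]
      exact le_max_right _ _
  -- the pivot index k0
  set k0 : ℕ := if x ≤ y (n+1) then n else n+1 with hk0_def
  have hk0l : y k0 ≤ x := by
    rw [hk0_def]; split
    · exact hx1
    · next h => linarith [le_of_not_ge h]
  have hk0r : x ≤ y (k0+1) := by
    rw [hk0_def]; split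
    · next h => exact h
    · exact hx2
  have hnk0 : n ≤ k0 ∧ k0 ≤ n + 1 := by
    rw [hk0_def]; split <;> omega
  have hk0pos : 1 ≤ k0 := le_trans hn hnk0.1
  have hak0 : ‖a n‖ ≤ 2 * ‖a k0‖ := by
    rcases eq_or_ne k0 n with he | hne
    · rw [he]; linarith [hapos n]
    · have hk0n : k0 = n + 1 := by omega
      rw [hk0n]
      have h := hr1 n
      rw [lt_div_iff₀ (hapos n)] at h
      nlinarith [hapos n, hεsmall, hεpos]
  -- distance function for the series index
  set D : ℕ → ℕ := fun k => if k + 1 ≤ k0 then k0 - (k+1) else k - k0 with hD_def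
  have hdd_le : ∀ k, dd (k+1) ≤ D k + 2 := by
    intro k
    have h1 := hnk0.1
    have h2 := hnk0.2
    simp only [hD_def, hdd_def]
    rcases le_or_gt (k+1) k0 with hc | hc
    · rw [if_pos hc]
      exact max_le (by omega) (by omega)
    · rw [if_neg (by omega)]
      exact max_le (by omega) (by omega)
  -- series terms
  have hHx := hH x
  set t : ℕ → ℂ := fun k => Complex.I * a (k + 1) * ((y (k + 1) : ℝ) : ℂ) /
      ((x : ℂ) + Complex.I * ((y (k + 1) : ℝ) : ℂ)) ^ 2 with ht_def
  have hQinv1 : (0:ℝ) ≤ 1/Q := by positivity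
  have hQinv2 : 1/Q < 1 := by rw [div_lt_one hQpos]; linarith
  have htnorm : ∀ k, ‖t k‖ ≤ 2 * (1/Q)^k := by
    intro k
    have h1 : ‖t k‖ ≤ ‖a (k+1)‖ / y (k+1) := by
      simp only [ht_def]
      exact norm_term_le _ _ _ (hypos (k+1))
    have h2 : ‖a (k+1)‖ / y (k+1) ≤ 2 / y (k+1) :=
      (div_le_div_iff_of_pos_right (hypos (k+1))).mpr (ha2 (k+1))
    have h3 : (2:ℝ) / y (k+1) ≤ 2 * (1/Q)^k := by
      rw [hy (k+1), div_le_iff₀ (by positivity)]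
      have hpe : (1/Q)^k * Q^(k+1) = Q := by
        rw [one_div, inv_pow, pow_succ]
        field_simp
      rw [mul_assoc, hpe]
      linarith
    linarith
  have ht_s : Summable t :=
    Summable.of_norm_bounded ((summable_geometric_of_lt_one hQinv1 hQinv2).mul_left 2) htnorm
  have htc_s : Summable (fun k => (starRingEnd ℂ) (a n) * t k) := ht_s.mul_left _
  have hg_s : Summable (fun k => ((starRingEnd ℂ) (a n) * t k).re) :=
    (Complex.hasSum_re htc_s.hasSum).summable
  have hgoal : ((starRingEnd ℂ) (a n) * H x).re = ∑' k, ((starRingEnd ℂ) (a n) * t k).re := by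
    rw [hHx, ← tsum_mul_left]
    exact (Complex.hasSum_re htc_s.hasSum).tsum_eq.symm
  rw [hgoal]
  -- bound functions
  set M : ℝ := ‖a n‖^2/(4*Q^2*x) with hM_def
  set A : ℕ → ℝ := fun k =>
    ‖a n‖ * ‖a (k+1)‖ * (2*x*(y (k+1))^2 / (x^2 + (y (k+1))^2)^2) with hA_def
  set e : ℕ → ℝ := fun k => 16 * ε * ‖a n‖^2 / x * (4/Q)^(D k) with he_def
  have hA0 : ∀ k, 0 ≤ A k := by
    intro k
    simp only [hA_def]
    apply mul_nonneg (mul_nonneg (norm_nonneg _) (norm_nonneg _))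
    apply div_nonneg ?_ (by positivity)
    exact mul_nonneg (mul_nonneg (by norm_num) hx0.le) (sq_nonneg _)
  have he0 : ∀ k, 0 ≤ e k := by
    intro k
    simp only [he_def]
    exact mul_nonneg (div_nonneg (by positivity) hx0.le) (by positivity)
  -- the pointwise lower bound
  have hge : ∀ k, A k - e k ≤ ((starRingEnd ℂ) (a n) * t k).re := by
    intro k
    have hYpos := hypos (k+1)
    have hδ : 0 ≤ ε * (dd (k+1) : ℝ) := mul_nonneg hεpos.le (Nat.cast_nonneg _)
    set v := (starRingEnd ℂ) (u n) * u (k+1) with hv_def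
    have hcu : (starRingEnd ℂ) (u n) * u n = 1 := by rw [mul_comm]; exact huc n
    have hv1 : ‖v - 1‖ ≤ ε * (dd (k+1) : ℝ) := by
      have h1 : v - 1 = (starRingEnd ℂ) (u n) * (u (k+1) - u n) := by
        rw [hv_def, mul_sub, hcu]
      rw [h1, norm_mul, RCLike.norm_conj, hu1 n, one_mul]
      exact huj (k+1)
    have hvre : 1 - ε * (dd (k+1) : ℝ) ≤ v.re := by
      have h2 : |(v - 1).re| ≤ ‖v - 1‖ := by
        exact Complex.abs_re_le_norm _
      simp only [Complex.sub_re, Complex.one_re] at h2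
      have h3 := abs_le.mp (h2.trans hv1)
      linarith [h3.1]
    have hvim : |v.im| ≤ ε * (dd (k+1) : ℝ) := by
      have h2 : |(v - 1).im| ≤ ‖v - 1‖ := by
        exact Complex.abs_im_le_norm _
      simp only [Complex.sub_im, Complex.one_im, sub_zero] at h2
      exact h2.trans hv1
    have hb : (starRingEnd ℂ) (a n) * a (k+1) = (((‖a n‖*‖a (k+1)‖ : ℝ)):ℂ) * v := by
      calc (starRingEnd ℂ) (a n) * a (k+1)
          = (starRingEnd ℂ) (((‖a n‖:ℝ):ℂ) * u n) * (((‖a (k+1)‖:ℝ):ℂ) * u (k+1)) := by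
            rw [hau n, hau (k+1)]
        _ = (((‖a n‖*‖a (k+1)‖ : ℝ)):ℂ) * v := by
            rw [hv_def, map_mul, Complex.conj_ofReal]
            push_cast
            ring
    have hbt : (starRingEnd ℂ) (a n) * t k
        = (((‖a n‖*‖a (k+1)‖ : ℝ)):ℂ) * v * (Complex.I * ((y (k+1) : ℝ):ℂ)) /
            ((x:ℂ) + Complex.I*((y (k+1) : ℝ):ℂ))^2 := by
      simp only [ht_def]
      rw [← mul_div_assoc]
      congr 1
      calc (starRingEnd ℂ) (a n) * (Complex.I * a (k+1) * ((y (k+1) : ℝ):ℂ))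
          = ((starRingEnd ℂ) (a n) * a (k+1)) * (Complex.I * ((y (k+1) : ℝ):ℂ)) := by ring
        _ = _ := by rw [hb]
    rw [hbt]
    have hmain := per_term x (y (k+1)) (‖a n‖*‖a (k+1)‖) (ε * (dd (k+1) : ℝ)) v hx0 hYpos
      (by positivity) hδ hvre hvim
    have hPk : x * Q^(D k) * y (k+1) ≤ x^2 + (y (k+1))^2 := by
      rcases le_or_gt (k+1) k0 with hc | hc
      · have hDk : D k = k0 - (k+1) := by simp only [hD_def]; rw [if_pos hc]
        have hpow : Q^(D k) * Q^(k+1) = Q^k0 := by rw [← pow_add]; congr 1; omega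
        have hxk : Q^k0 ≤ x := by rw [← hy k0]; exact hk0l
        have hy1 : y (k+1) = Q^(k+1) := hy (k+1)
        calc x * Q^(D k) * y (k+1) = x * (Q^(D k) * Q^(k+1)) := by rw [hy1]; ring
          _ = x * Q^k0 := by rw [hpow]
          _ ≤ x * x := mul_le_mul_of_nonneg_left hxk hx0.le
          _ ≤ x^2 + (y (k+1))^2 := by nlinarith [sq_nonneg (y (k+1))]
      · have hDk : D k = k - k0 := by simp only [hD_def]; rw [if_neg (by omega)]
        have hpow : Q^(k0+1) * Q^(D k) = Q^(k+1) := by rw [← pow_add]; congr 1; omega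
        have hxk : x ≤ Q^(k0+1) := by rw [← hy (k0+1)]; exact hk0r
        have hy1 : y (k+1) = Q^(k+1) := hy (k+1)
        have h5 : x * Q^(D k) * y (k+1) ≤ Q^(k0+1) * Q^(D k) * y (k+1) := by
          apply mul_le_mul_of_nonneg_right ?_ (hypos (k+1)).le
          exact mul_le_mul_of_nonneg_right hxk (pow_pos hQpos _).le
        calc x * Q^(D k) * y (k+1) ≤ Q^(k0+1) * Q^(D k) * y (k+1) := h5
          _ = Q^(k+1) * y (k+1) := by rw [hpow]
          _ = (y (k+1))^2 := by rw [hy1]; ring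
          _ ≤ x^2 + (y (k+1))^2 := by nlinarith [sq_nonneg x]
    have herr : 2*(ε*(dd (k+1):ℝ))*(‖a n‖*‖a (k+1)‖)*(y (k+1))/(x^2+(y (k+1))^2) ≤ e k := by
      simp only [he_def]
      exact error_bound ε Q x (y (k+1)) (‖a n‖) (‖a (k+1)‖) (D k) (dd (k+1)) hεpos hεsmall
        hQ10 hx0 hYpos (hapos n) (hapos (k+1)) (haj (k+1)) (hdd_le k) hPk
    have hAk : A k = ‖a n‖*‖a (k+1)‖ * (2*x*(y (k+1))^2 / (x^2 + (y (k+1))^2)^2) := by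
      simp only [hA_def]
    linarith [hmain, herr]
  -- main term bound
  have hk0idx : k0 - 1 + 1 = k0 := by omega
  have hMA : M ≤ A (k0-1) := by
    have h2 : x ≤ Q * y k0 := by
      have := hk0r
      rw [hy (k0+1)] at this
      rw [hy k0]
      calc x ≤ Q^(k0+1) := this
        _ = Q * Q^k0 := by rw [pow_succ]; ring
    have hmt := main_term Q x (y k0) (‖a n‖) (‖a k0‖) hQ10 hx0 (hypos k0) hk0l h2
      (hapos n) (hapos k0) hak0
    simp only [hA_def, hk0idx, hM_def]
    exact hmt
  -- sum of the error terms
  have hr45 : (0:ℝ) ≤ 4/Q := by positivity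
  have hr45' : 4/Q < 1 := by rw [div_lt_one hQpos]; linarith
  have hKpos : 0 < 16 * ε * ‖a n‖^2 / x := div_pos (mul_pos (mul_pos (by norm_num) hεpos) (pow_pos (hapos n) 2)) hx0
  have heshift : ∀ k, e (k + k0) = 16 * ε * ‖a n‖^2 / x * (4/Q)^k := by
    intro k
    simp only [he_def]
    congr 2
    simp only [hD_def]
    rw [if_neg (by omega)]
    omega
  have he_s : Summable e := by
    rw [← summable_nat_add_iff k0]
    apply Summable.congr ((summable_geometric_of_lt_one hr45 hr45').mul_left
      (16 * ε * ‖a n‖^2 / x))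
    intro k
    exact (heshift k).symm
  have hgeo : ∑' (k:ℕ), (4/Q)^k = (1 - 4/Q)⁻¹ := tsum_geometric_of_lt_one hr45 hr45'
  have hgeo2 : (1 - 4/Q)⁻¹ ≤ 2 := by
    have h45 : 4/Q ≤ 1/2 := by rw [div_le_iff₀ hQpos]; linarith
    have h46 : (1:ℝ)/2 ≤ 1 - 4/Q := by linarith
    calc (1 - 4/Q)⁻¹ ≤ ((1:ℝ)/2)⁻¹ := by
          apply inv_anti₀ (by norm_num) h46
      _ = 2 := by norm_num
  have hesum : ∑' k, e k ≤ 4 * (16 * ε * ‖a n‖^2 / x) := by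
    rw [← Summable.sum_add_tsum_nat_add k0 he_s]
    have hpart2 : ∑' (k:ℕ), e (k + k0) ≤ 2*(16 * ε * ‖a n‖^2 / x) := by
      have hq : ∑' (k:ℕ), e (k + k0) = (16 * ε * ‖a n‖^2 / x) * ∑' (k:ℕ), (4/Q)^k := by
        rw [← tsum_mul_left]
        exact tsum_congr heshift
      rw [hq, hgeo]
      calc (16 * ε * ‖a n‖^2 / x) * (1-4/Q)⁻¹ ≤ (16 * ε * ‖a n‖^2 / x) * 2 :=
            mul_le_mul_of_nonneg_left hgeo2 hKpos.le
        _ = 2*(16 * ε * ‖a n‖^2 / x) := by ring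
    have hpart1 : ∑ i ∈ Finset.range k0, e i ≤ 2*(16 * ε * ‖a n‖^2 / x) := by
      have hval : ∀ i ∈ Finset.range k0, e i = (16 * ε * ‖a n‖^2 / x) * (4/Q)^(k0-1-i) := by
        intro i hi
        rw [Finset.mem_range] at hi
        simp only [he_def]
        congr 2
        simp only [hD_def]
        rw [if_pos (by omega)]
        omega
      rw [Finset.sum_congr rfl hval, ← Finset.mul_sum]
      rw [Finset.sum_range_reflect (fun i => (4/Q)^i) k0]
      have hle : ∑ i ∈ Finset.range k0, (4/Q)^i ≤ (1-4/Q)⁻¹ := by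
        rw [← hgeo]
        exact Summable.sum_le_tsum _ (fun i _ => by positivity)
          (summable_geometric_of_lt_one hr45 hr45')
      calc (16 * ε * ‖a n‖^2 / x) * ∑ i ∈ Finset.range k0, (4/Q)^i
          ≤ (16 * ε * ‖a n‖^2 / x) * (1-4/Q)⁻¹ := mul_le_mul_of_nonneg_left hle hKpos.le
        _ ≤ (16 * ε * ‖a n‖^2 / x) * 2 := mul_le_mul_of_nonneg_left hgeo2 hKpos.le
        _ = 2*(16 * ε * ‖a n‖^2 / x) := by ring
    linarith
  -- assemble
  have hite_s : Summable (fun k => if k = k0 - 1 then M else (0:ℝ)) :=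
    (hasSum_ite_eq (k0-1) M).summable
  have hh_s : Summable (fun k => (if k = k0 - 1 then M else (0:ℝ)) - e k) := hite_s.sub he_s
  have hhg : ∀ k, (if k = k0 - 1 then M else (0:ℝ)) - e k
      ≤ ((starRingEnd ℂ) (a n) * t k).re := by
    intro k
    rcases eq_or_ne k (k0-1) with hc | hc
    · rw [if_pos hc, hc]
      linarith [hMA, hge (k0-1)]
    · rw [if_neg hc]
      linarith [hge k, hA0 k]
  have hsum_h : ∑' k, ((if k = k0 - 1 then M else (0:ℝ)) - e k) = M - ∑' k, e k := by
    rw [Summable.tsum_sub hite_s he_s, tsum_ite_eq]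
  have hfinal : 0 < M - ∑' k, e k := by
    have hq : 256 * (ε * Q^2) < 1 := by nlinarith [hεQ2]
    have h2 : 4 * (16 * ε * ‖a n‖^2 / x) < M := by
      simp only [hM_def]
      rw [show 4 * (16 * ε * ‖a n‖^2 / x) = (64*ε*‖a n‖^2)/x from by ring]
      rw [div_lt_div_iff₀ hx0 (by positivity)]
      nlinarith [hq, mul_pos (mul_pos (pow_pos (hapos n) 2) hx0) (pow_pos hQpos 2)]
    linarith [hesum]
  have hlast := Summable.tsum_le_tsum hhg hh_s hg_s
  rw [hsum_h] at hlast
  linarith [hfinal, hlast]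
end
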